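/- arXiv:1509.03784 — 8 statements merged into one kernel-verified Lean document; each statement's English description precedes it below -/
import Mathlib

section
/- Let F be a field, let x_1, …, x_n be nonzero elements of F, let s ≥ 1, let i_1 < i_2 < … < i_s be nonnegative integers in arithmetic progression with common difference k ≥ 1, let k_1, …, k_s ∈ {1, …, n} be distinct, and let S be the s × s matrix with (p,q) entry x_{k_q}^{i_p}. Then det S ≠ 0 if and only if for all p ≠ q the ratio x_{k_p} x_{k_q}^{-1} is not a k-th root of unity, i.e. (x_{k_p} x_{k_q}^{-1})^k ≠ 1 for all p ≠ q with 1 ≤ p, q ≤ s. -/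
open Finset

noncomputable section

/-- The componentwise (star) product on `Fin n → F`. -/
def starMul {F : Type*} [Mul F] {n : ℕ} (u v : Fin n → F) : Fin n → F :=
  fun i => u i * v i

/-- The standard bilinear form `⟨u,v⟩ = ∑ i, u i * v i` on `Fin n → F`. -/
def bil {F : Type*} [Semiring F] {n : ℕ} (u v : Fin n → F) : F :=
  ∑ i, u i * v i

/-- The Hamming weight of a vector: the number of its nonzero coordinates. -/
def hWeight {F : Type*} [Zero F] {n : ℕ} (v : Fin n → F) : ℕ :=
  Set.ncard {i | v i ≠ 0}

/-- The dual code of a linear code `C ⊆ F^n` with respect to `⟨u,v⟩ = ∑ i, u i * v i`. -/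
def dualCode {F : Type*} [Field F] {n : ℕ} (C : Submodule F (Fin n → F)) :
    Submodule F (Fin n → F) where
  carrier := {x | ∀ c ∈ C, bil x c = 0}
  zero_mem' := by
    intro c hc
    simp [bil]
  add_mem' := by
    intro a b ha hb c hc
    have h : bil (a + b) c = bil a c + bil b c := by
      simp only [bil, Pi.add_apply, add_mul]
      exact Finset.sum_add_distrib
    simp only [Set.mem_setOf_eq] at ha hb ⊢
    rw [h, ha c hc, hb c hc, add_zero]
  smul_mem' := by
    intro r a ha c hc
    have h : bil (r • a) c = r * bil a c := by
      simp only [bil, Pi.smul_apply, smul_eq_mul, Finset.mul_sum, mul_assoc]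
    simp only [Set.mem_setOf_eq] at ha ⊢
    rw [h, ha c hc, mul_zero]

/-- The minimum distance of a code: the least Hamming weight of a nonzero codeword. -/
def minDist {F : Type*} [Field F] {n : ℕ} (C : Submodule F (Fin n → F)) : ℕ :=
  sInf {d | ∃ c ∈ C, c ≠ 0 ∧ hWeight c = d}

/-- A code is MDS if its minimum distance equals `n - dim + 1`. -/
def IsMDS {F : Type*} [Field F] {n : ℕ} (C : Submodule F (Fin n → F)) : Prop :=
  minDist C = n - Module.finrank F C + 1

/-- `U*V`: the span of all componentwise products `u*v` with `u ∈ U`, `v ∈ V`. -/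
def starSpan {F : Type*} [Field F] {n : ℕ} (U V : Submodule F (Fin n → F)) :
    Submodule F (Fin n → F) :=
  Submodule.span F {w | ∃ u ∈ U, ∃ v ∈ V, w = starMul u v}

/-- `(U, V)` is a `t`-error correcting pair for `C`. -/
def IsECP {F : Type*} [Field F] {n : ℕ} (t : ℕ) (U V C : Submodule F (Fin n → F)) : Prop :=
  starSpan U V ≤ dualCode C ∧
  t < Module.finrank F U ∧
  n < minDist U + minDist C ∧
  t < minDist (dualCode V)

/-- such a submatrix `S` has `det S ≠ 0` iff no ratio `x_{k_p}/x_{k_q}`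
(`p ≠ q`) is a `k`-th root of unity. -/
theorem stmt5 {F : Type*} [Field F] (n s : ℕ) (hs : 1 ≤ s)
    (x : Fin n → F) (hx : ∀ i, x i ≠ 0)
    (i : Fin s → ℕ) (i0 k : ℕ) (hk : 1 ≤ k)
    (harith : ∀ p : Fin s, i p = i0 + (p : ℕ) * k)
    (hmono : StrictMono i)
    (κ : Fin s → Fin n) (hκ : Function.Injective κ) :
    (Matrix.of fun p q : Fin s => x (κ q) ^ i p).det ≠ 0 ↔
      ∀ p q : Fin s, p ≠ q → (x (κ p) * (x (κ q))⁻¹) ^ k ≠ 1 := by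
  set y : Fin s → F := fun q => x (κ q) ^ k with hy
  have hdet : (Matrix.of fun p q : Fin s => x (κ q) ^ i p).det
      = (∏ q, x (κ q) ^ i0) * ((Matrix.vandermonde y).transpose).det := by
    rw [← Matrix.det_mul_row]
    congr 1
    ext p q
    simp only [Matrix.of_apply, Matrix.transpose_apply, Matrix.vandermonde_apply, hy,
      harith, pow_add]
    rw [Nat.mul_comm, pow_mul]
  have key : ∀ p q : Fin s, (x (κ p) * (x (κ q))⁻¹) ^ k = 1 ↔ y p = y q := by
    intro p q
    rw [mul_pow, inv_pow, mul_inv_eq_one₀ (pow_ne_zero _ (hx _))]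
  have hπ : (∏ q, x (κ q) ^ i0) ≠ 0 :=
    Finset.prod_ne_zero_iff.mpr fun q _ => pow_ne_zero _ (hx _)
  rw [hdet, Matrix.det_transpose, Matrix.det_vandermonde, mul_ne_zero_iff]
  rw [and_iff_right hπ]
  rw [Finset.prod_ne_zero_iff]
  simp only [Finset.mem_univ, true_implies, Finset.prod_ne_zero_iff, Finset.mem_Ioi,
    sub_ne_zero]
  constructor
  · intro h p q hpq
    rw [Ne, key]
    rcases hpq.lt_or_gt with hlt | hlt
    · exact (h p q hlt).symm
    · exact h q p hlt
  · intro h a b hab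
    exact (key b a).not.mp (h b a hab.ne')
end
end

section
/- Let x_1, …, x_n be distinct nonzero real numbers, let s ≥ 1, let i_1 < i_2 < … < i_s be nonnegative integers in arithmetic progression with common difference k ≥ 1, let k_1, …, k_s ∈ {1, …, n} be distinct, and let S be the s × s real matrix with (p,q) entry x_{k_q}^{i_p}. If either (i) k is odd, or (ii) k is even and x_{k_p} ≠ −x_{k_q} for all p ≠ q, then det S ≠ 0. -/
open Finset

noncomputable section

/-- over ℝ with distinct nonzero `x_i`: if `k` is odd, or `k` is even and
`x_{k_p} ≠ -x_{k_q}` for all `p ≠ q`, then `det S ≠ 0`. -/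
theorem stmt6 (n s : ℕ) (hs : 1 ≤ s)
    (x : Fin n → ℝ) (hx : ∀ i, x i ≠ 0) (hxdist : Function.Injective x)
    (i : Fin s → ℕ) (i0 k : ℕ) (hk : 1 ≤ k)
    (harith : ∀ p : Fin s, i p = i0 + (p : ℕ) * k)
    (hmono : StrictMono i)
    (κ : Fin s → Fin n) (hκ : Function.Injective κ)
    (hcase : Odd k ∨ (Even k ∧ ∀ p q : Fin s, p ≠ q → x (κ p) ≠ -(x (κ q)))) :
    (Matrix.of fun p q : Fin s => x (κ q) ^ i p).det ≠ 0 := by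
    have hyinj : Function.Injective fun q : Fin s => x (κ q) ^ k := by
      intro p q h
      by_contra hpq
      rw [pow_eq_pow_iff_of_ne_zero (by omega)] at h
      rcases h with h | ⟨h, hek⟩
      · exact hpq (hκ (hxdist h))
      · rcases hcase with hodd | ⟨_, hne⟩
        · exact (Nat.not_odd_iff_even.mpr hek) hodd
        · exact hne p q hpq h
    have hM : (Matrix.of fun p q : Fin s => x (κ q) ^ i p) =
        (Matrix.vandermonde fun q => x (κ q) ^ k).transpose *
          Matrix.diagonal (fun q => x (κ q) ^ i0) := by
      ext p q
      rw [Matrix.mul_diagonal]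
      simp only [Matrix.of_apply, Matrix.transpose_apply, Matrix.vandermonde_apply]
      rw [harith p, ← pow_mul, ← pow_add]
      ring_nf
    rw [hM, Matrix.det_mul, Matrix.det_transpose, Matrix.det_diagonal]
    exact mul_ne_zero (Matrix.det_vandermonde_ne_zero_iff.mpr hyinj)
      (Finset.prod_ne_zero_iff.mpr fun q _ => pow_ne_zero _ (hx _))
end
end

section
/- Let n ≥ 1, let ω ∈ ℂ be a primitive n-th root of unity, and set x_i = ω^{i-1} for i = 1, …, n. Let s ≥ 1, let i_1 < i_2 < … < i_s be nonnegative integers in arithmetic progression with common difference k ≥ 1 satisfying gcd(k, n) = 1, let k_1, …, k_s ∈ {1, …, n} be distinct, and let S be the s × s complex matrix with (p,q) entry x_{k_q}^{i_p} = ω^{(k_q − 1) i_p}. Then det S ≠ 0. -/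
open Finset

noncomputable section

/-- for the Fourier matrix (`x_i = ω^{i-1}`, `ω` a primitive `n`-th root
of unity) with row indices in arithmetic progression of difference `k`, `gcd(k,n)=1`,
any such submatrix has nonzero determinant. -/
theorem stmt8 (n : ℕ) (hn : 1 ≤ n) (ω : ℂ) (hω : IsPrimitiveRoot ω n)
    (s : ℕ) (hs : 1 ≤ s)
    (i : Fin s → ℕ) (i0 k : ℕ) (hk : 1 ≤ k) (hkn : Nat.gcd k n = 1)
    (harith : ∀ p : Fin s, i p = i0 + (p : ℕ) * k)
    (hmono : StrictMono i)
    (κ : Fin s → Fin n) (hκ : Function.Injective κ) :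
    (Matrix.of fun p q : Fin s => ω ^ ((κ q : ℕ) * i p)).det ≠ 0 := by
  set y : Fin s → ℂ := fun q => (ω ^ k) ^ (κ q : ℕ) with hy
  have hωk : IsPrimitiveRoot (ω ^ k) n := hω.pow_of_coprime k hkn
  have hyinj : Function.Injective y := by
    intro a b hab
    apply hκ
    exact Fin.ext (hωk.pow_inj (κ a).isLt (κ b).isLt hab)
  have hdecomp : (Matrix.of fun p q : Fin s => ω ^ ((κ q : ℕ) * i p))
      = Matrix.of (fun p q : Fin s => (ω ^ ((κ q : ℕ) * i0)) * (Matrix.transpose (Matrix.vandermonde y) p q)) := by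
    ext p q
    simp only [Matrix.of_apply, Matrix.transpose_apply, Matrix.vandermonde_apply, hy]
    rw [harith p, Nat.mul_add, pow_add]
    ring_nf
  rw [hdecomp]
  rw [Matrix.det_mul_row (fun q : Fin s => ω ^ ((κ q : ℕ) * i0)) (Matrix.transpose (Matrix.vandermonde y))]
  have hω0 : ω ≠ 0 := hω.ne_zero (by omega)
  apply mul_ne_zero
  · exact Finset.prod_ne_zero_iff.mpr fun q _ => pow_ne_zero _ hω0
  · rw [Matrix.det_transpose, Matrix.det_vandermonde]
    apply Finset.prod_ne_zero_iff.mpr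
    intro a _
    apply Finset.prod_ne_zero_iff.mpr
    intro b hb
    rw [Finset.mem_Ioi] at hb
    exact sub_ne_zero_of_ne fun h => absurd (hyinj h) (ne_of_gt hb)
end
end

section
/- Let n ≥ 1, let ω ∈ ℂ be a primitive n-th root of unity, and let the Fourier n × n matrix have rows E_0, …, E_{n-1} with E_i = (ω^{i·0}, ω^{i·1}, …, ω^{i·(n-1)}) ∈ ℂ^n. Let 1 ≤ u ≤ n, let k ≥ 1 satisfy gcd(n, k) = 1, and let j_1, …, j_u ∈ {0, …, n-1} with j_{l+1} ≡ j_l + k (mod n) for l = 1, …, u−1 (so the chosen rows are evenly spaced with arithmetic difference k). Let Ĉ be the u × n matrix whose rows are E_{j_1}, …, E_{j_u}. Then every u × u square submatrix of Ĉ (obtained by selecting any u distinct columns of Ĉ) has nonzero determinant. -/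
open Finset

noncomputable section

/-- rows `E_{j_1}, …, E_{j_u}` of the Fourier matrix, evenly spaced mod `n`
with difference `k`, `gcd(n,k)=1`: every `u × u` submatrix of the resulting `u × n`
matrix has nonzero determinant. -/
theorem stmt9 (n : ℕ) (hn : 1 ≤ n) (ω : ℂ) (hω : IsPrimitiveRoot ω n)
    (u : ℕ) (hu1 : 1 ≤ u) (hun : u ≤ n)
    (k : ℕ) (hk : 1 ≤ k) (hkn : Nat.gcd n k = 1)
    (jj : Fin u → Fin n)
    (hjj : ∀ (l : ℕ) (h : l + 1 < u),
      ((jj ⟨l + 1, h⟩ : ℕ)) ≡ ((jj ⟨l, by omega⟩ : ℕ)) + k [MOD n])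
    (c : Fin u → Fin n) (hc : Function.Injective c) :
    (Matrix.of fun l m : Fin u => ω ^ ((jj l : ℕ) * (c m : ℕ))).det ≠ 0 := by
  have hωn : ω ^ n = 1 := hω.pow_eq_one
  have hmod : ∀ a : ℕ, ω ^ a = ω ^ (a % n) := by
    intro a
    conv_lhs => rw [← Nat.div_add_mod a n]
    rw [pow_add, pow_mul, hωn, one_pow, one_mul]
  have hpow_congr : ∀ a b : ℕ, a ≡ b [MOD n] → ω ^ a = ω ^ b := by
    intro a b hab
    rw [hmod a, hmod b, hab]
  have hjl : ∀ l : Fin u, ((jj l : ℕ)) ≡ (jj ⟨0, by omega⟩ : ℕ) + l * k [MOD n] := by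
    intro ⟨l, hl⟩
    induction l with
    | zero => simpa using Nat.ModEq.refl _
    | succ m ih =>
      have h1 := hjj m hl
      have h2 := (ih (by omega)).add_right k
      simp only at h1 h2 ⊢
      calc ((jj ⟨m+1, hl⟩ : ℕ)) ≡ (jj ⟨m, by omega⟩ : ℕ) + k [MOD n] := h1
        _ ≡ ((jj ⟨0, by omega⟩ : ℕ) + m * k) + k [MOD n] := h2
        _ = (jj ⟨0, by omega⟩ : ℕ) + (m+1) * k := by ring
  set j0 : ℕ := (jj ⟨0, by omega⟩ : ℕ) with hj0
  set x : Fin u → ℂ := fun m => ω ^ (k * (c m : ℕ)) with hx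
  have hmat : (Matrix.of fun l m : Fin u => ω ^ ((jj l : ℕ) * (c m : ℕ)))
      = Matrix.of fun l m : Fin u =>
          (fun m' : Fin u => ω ^ (j0 * (c m' : ℕ))) m * Matrix.transpose (Matrix.vandermonde x) l m := by
    ext l m
    simp only [Matrix.of_apply, Matrix.transpose_apply, Matrix.vandermonde_apply, hx]
    rw [← pow_mul, ← pow_add]
    apply hpow_congr
    have h3 : (jj l : ℕ) * (c m : ℕ) ≡ (j0 + l * k) * (c m : ℕ) [MOD n] :=
      (hjl l).mul_right (c m : ℕ)
    calc (jj l : ℕ) * (c m : ℕ) ≡ (j0 + l * k) * (c m : ℕ) [MOD n] := h3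
      _ = j0 * (c m : ℕ) + k * (c m : ℕ) * l := by ring
  rw [hmat, Matrix.det_mul_row, Matrix.det_transpose]
  apply mul_ne_zero
  · apply Finset.prod_ne_zero_iff.mpr
    intro m _
    exact pow_ne_zero _ (hω.ne_zero (by omega))
  · rw [Matrix.det_vandermonde_ne_zero_iff]
    have hprim : IsPrimitiveRoot (ω ^ k) n := hω.pow_of_coprime k (Nat.Coprime.symm hkn)
    intro a b hab
    apply hc
    simp only [hx] at hab
    rw [pow_mul, pow_mul] at hab
    have := hprim.pow_inj (c a).isLt (c b).isLt hab
    exact Fin.ext this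
end
end

section
/- Let F be a field, n ≥ 1, t ≥ 1, and let U and V be MDS linear codes in F^n with dim U = t + 1 and dim V = t. Let C be any nonzero linear code in F^n such that C is orthogonal to U*V, i.e. C ⊆ (U*V)^⊥. Then the minimum distance of C satisfies d(C) ≥ 2t + 1, and (U, V) is a t-error correcting pair for C. -/
open Finset

noncomputable section

/-!
An MDS code of dimension `k` is injective under restriction to any `k` coordinates, hence
takes arbitrary prescribed values on them. So if a nonzero `c ⊥ U*V` had weight below
`dim U + dim V`, one could pick `u ∈ U`, `v ∈ V`, both equal to `1` at one point `i` of the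
support of `c`, with `u` vanishing on `dim U - 1` further points of the support and `v` on the
remaining ones; then `⟨c, u*v⟩ = c i ≠ 0`. The same argument with `V` alone gives
`d(V^⊥) ≥ dim V + 1`.
-/

open Module

section Weight

variable {F : Type*} [Zero F] {n : ℕ}

lemma hWeight_eq_card_filter [DecidableEq F] (v : Fin n → F) :
    hWeight v = #{i | v i ≠ 0} := by
  rw [hWeight, ← Set.ncard_coe_finset]
  simp

lemma hWeight_le_card {v : Fin n → F} {S : Finset (Fin n)} (h : ∀ i, v i ≠ 0 → i ∈ S) :
    hWeight v ≤ #S := by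
  rw [hWeight, ← Set.ncard_coe_finset]
  exact Set.ncard_le_ncard h

end Weight

section Distance

variable {F : Type*} [Field F] {n : ℕ}

lemma minDist_le_hWeight {C : Submodule F (Fin n → F)} {c : Fin n → F} (hc : c ∈ C)
    (hc0 : c ≠ 0) : minDist C ≤ hWeight c :=
  Nat.sInf_le ⟨c, hc, hc0, rfl⟩

lemma le_minDist {C : Submodule F (Fin n → F)} {d : ℕ} (hC : C ≠ ⊥)
    (h : ∀ c ∈ C, c ≠ 0 → d ≤ hWeight c) : d ≤ minDist C := by
  obtain ⟨c, hc, hc0⟩ := (Submodule.ne_bot_iff C).mp hC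
  refine le_csInf ⟨_, c, hc, hc0, rfl⟩ ?_
  rintro _ ⟨c, hc, hc0, rfl⟩
  exact h c hc hc0

lemma finrank_le_length (W : Submodule F (Fin n → F)) : finrank F W ≤ n :=
  (Submodule.finrank_le W).trans_eq (finrank_fin_fun F)

end Distance

section Duality

lemma bil_comm {F : Type*} [CommSemiring F] {n : ℕ} (u v : Fin n → F) : bil u v = bil v u := by
  simp only [bil, mul_comm]

lemma bil_eq_apply_of_forall_ne {F : Type*} [Semiring F] {n : ℕ} {x y : Fin n → F} {i : Fin n}
    (hyi : y i = 1) (hy : ∀ j ≠ i, x j ≠ 0 → y j = 0) : bil x y = x i := by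
  rw [bil, Finset.sum_eq_single i (fun j _ hj => ?_) (by simp), hyi, mul_one]
  by_cases hxj : x j = 0
  · rw [hxj, zero_mul]
  · rw [hy j hj hxj, mul_zero]

variable {F : Type*} [Field F] {n : ℕ}

lemma le_dualCode_comm {A B : Submodule F (Fin n → F)} : A ≤ dualCode B ↔ B ≤ dualCode A :=
  ⟨fun h b hb a ha => (bil_comm b a).trans (h ha b hb),
    fun h a ha b hb => (bil_comm a b).trans (h hb a ha)⟩

lemma dualCode_eq_comap_dualAnnihilator (V : Submodule F (Fin n → F)) :
    dualCode V = V.dualAnnihilator.comap (dotProductEquiv F (Fin n)).toLinearMap := by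
  ext x
  simp only [Submodule.mem_comap, Submodule.mem_dualAnnihilator]
  rfl

lemma finrank_dualCode_add_finrank (V : Submodule F (Fin n → F)) :
    finrank F (dualCode V) + finrank F V = n := by
  rw [dualCode_eq_comap_dualAnnihilator, Submodule.comap_equiv_eq_map_symm,
    LinearEquiv.finrank_map_eq, add_comm, Subspace.finrank_add_finrank_dualAnnihilator_eq,
    finrank_fin_fun]

lemma dualCode_ne_bot {V : Submodule F (Fin n → F)} (hV : finrank F V < n) : dualCode V ≠ ⊥ := by
  intro h
  have := finrank_dualCode_add_finrank V
  rw [h, finrank_bot] at this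
  omega

end Duality

namespace IsMDS

variable {F : Type*} [Field F] {n : ℕ} {W : Submodule F (Fin n → F)}

lemma le_hWeight (hW : IsMDS W) {w : Fin n → F} (hw : w ∈ W) (hw0 : w ≠ 0) :
    n - finrank F W + 1 ≤ hWeight w :=
  hW ▸ minDist_le_hWeight hw hw0

lemma eq_zero_of_forall_mem_eq_zero (hW : IsMDS W) {S : Finset (Fin n)} (hS : finrank F W ≤ #S)
    {w : Fin n → F} (hw : w ∈ W) (hwS : ∀ i ∈ S, w i = 0) : w = 0 := by
  by_contra hw0
  have hle : hWeight w ≤ #Sᶜ := hWeight_le_card fun i hi => mem_compl.mpr fun hiS => hi (hwS i hiS)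
  have hSn : #S ≤ n := by simpa using card_le_univ S
  have := hW.le_hWeight hw hw0
  rw [card_compl, Fintype.card_fin] at hle
  omega

lemma exists_eqOn (hW : IsMDS W) {S : Finset (Fin n)} (hS : #S ≤ finrank F W) (g : Fin n → F) :
    ∃ w ∈ W, ∀ i ∈ S, w i = g i := by
  obtain ⟨S', hSS', hS'⟩ := exists_superset_card_eq hS (by simpa using finrank_le_length W)
  let restrict : W →ₗ[F] (S' → F) := LinearMap.funLeft F F ((↑) : S' → Fin n) ∘ₗ W.subtype
  have hinj : Function.Injective restrict := by
    refine (injective_iff_map_eq_zero restrict).mpr fun w hw => Subtype.ext ?_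
    exact hW.eq_zero_of_forall_mem_eq_zero hS'.ge w.2 fun i hi => congrFun hw ⟨i, hi⟩
  have hdim : finrank F W = finrank F (S' → F) := by simp [hS']
  obtain ⟨w, hw⟩ := (LinearMap.injective_iff_surjective_of_finrank_eq_finrank hdim).mp hinj
    fun i => g i
  exact ⟨w, w.2, fun i hi => congrFun hw ⟨i, hSS' hi⟩⟩

lemma exists_apply_eq_one (hW : IsMDS W) {S : Finset (Fin n)} (hS : #S ≤ finrank F W) {i : Fin n}
    (hi : i ∈ S) : ∃ w ∈ W, w i = 1 ∧ ∀ j ∈ S, j ≠ i → w j = 0 := by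
  classical
  obtain ⟨w, hw, hwg⟩ := hW.exists_eqOn hS (Pi.single i 1)
  exact ⟨w, hw, by simpa using hwg i hi, fun j hj hji => by simpa [hji] using hwg j hj⟩

lemma finrank_add_one_le_hWeight_of_mem_dualCode (hW : IsMDS W) {x : Fin n → F}
    (hx : x ∈ dualCode W) (hx0 : x ≠ 0) : finrank F W + 1 ≤ hWeight x := by
  classical
  by_contra! hlt
  obtain ⟨i, hi⟩ : ∃ i, x i ≠ 0 := Function.ne_iff.mp hx0
  obtain ⟨w, hw, hwi, hw0⟩ := hW.exists_apply_eq_one (S := {j | x j ≠ 0})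
    (by rw [← hWeight_eq_card_filter]; omega) (by simpa using hi)
  refine hi ((bil_eq_apply_of_forall_ne hwi fun j hji hj => ?_).symm.trans (hx w hw))
  exact hw0 j (by simpa using hj) hji

lemma finrank_add_finrank_le_hWeight {U V : Submodule F (Fin n → F)} (hU : IsMDS U)
    (hV : IsMDS V) (hU0 : 0 < finrank F U) (hV0 : 0 < finrank F V) {c : Fin n → F}
    (hc : c ∈ dualCode (starSpan U V)) (hc0 : c ≠ 0) :
    finrank F U + finrank F V ≤ hWeight c := by
  classical
  by_contra! hlt
  obtain ⟨i, hi⟩ : ∃ i, c i ≠ 0 := Function.ne_iff.mp hc0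
  set T : Finset (Fin n) := ({j | c j ≠ 0} : Finset (Fin n)).erase i
  have hT : #T + 2 ≤ finrank F U + finrank F V := by
    rw [card_erase_of_mem (by simpa using hi), ← hWeight_eq_card_filter]
    omega
  obtain ⟨A, hAT, hA⟩ := exists_subset_card_eq (min_le_right (finrank F U - 1) #T)
  obtain ⟨u, hu, hui, hu0⟩ := hU.exists_apply_eq_one (S := insert i A)
    ((card_insert_le i A).trans (by omega)) (mem_insert_self i A)
  obtain ⟨v, hv, hvi, hv0⟩ := hV.exists_apply_eq_one (S := insert i (T \ A))
    ((card_insert_le i _).trans (by rw [card_sdiff_of_subset hAT]; omega)) (mem_insert_self i _)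
  have huv : bil c (starMul u v) = c i := by
    refine bil_eq_apply_of_forall_ne (by simp [starMul, hui, hvi]) fun j hji hj => ?_
    have hjT : j ∈ T := by simpa [T, hji] using hj
    by_cases hjA : j ∈ A
    · simp [starMul, hu0 j (mem_insert_of_mem hjA) hji]
    · simp [starMul, hv0 j (mem_insert_of_mem (mem_sdiff.mpr ⟨hjT, hjA⟩)) hji]
  exact hi (huv.symm.trans (hc _ (Submodule.subset_span ⟨u, hu, v, hv, rfl⟩)))

end IsMDS

theorem stmt11_general {F : Type*} [Field F] (n t : ℕ) (ht : 1 ≤ t)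
    (U V C : Submodule F (Fin n → F))
    (hUMDS : IsMDS U) (hUdim : Module.finrank F U = t + 1)
    (hVMDS : IsMDS V) (hVdim : Module.finrank F V = t)
    (hC : C ≤ dualCode (starSpan U V)) (hC0 : C ≠ ⊥) :
    2 * t + 1 ≤ minDist C ∧ IsECP t U V C := by
  have htn : t + 1 ≤ n := hUdim ▸ finrank_le_length U
  have hdC : 2 * t + 1 ≤ minDist C := le_minDist hC0 fun c hc hc0 => by
    have := hUMDS.finrank_add_finrank_le_hWeight hVMDS (by omega) (by omega) (hC hc) hc0
    omega
  have hdVdual : t + 1 ≤ minDist (dualCode V) :=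
    le_minDist (dualCode_ne_bot (by omega)) fun x hx hx0 =>
      hVdim ▸ hVMDS.finrank_add_one_le_hWeight_of_mem_dualCode hx hx0
  refine ⟨hdC, le_dualCode_comm.mp hC, by omega, ?_, by omega⟩
  rw [hUMDS, hUdim]
  omega

/-- Duursma–Kötter: if `U`, `V` are MDS of dimensions `t+1`, `t` and the
nonzero code `C` satisfies `C ⊆ (U*V)^⊥`, then `d(C) ≥ 2t+1` and `(U,V)` is a
`t`-error correcting pair for `C`. -/
theorem stmt11 {F : Type*} [Field F] (n t : ℕ) (hn : 1 ≤ n) (ht : 1 ≤ t)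
    (U V C : Submodule F (Fin n → F))
    (hUMDS : IsMDS U) (hUdim : Module.finrank F U = t + 1)
    (hVMDS : IsMDS V) (hVdim : Module.finrank F V = t)
    (hC : C ≤ dualCode (starSpan U V)) (hC0 : C ≠ ⊥) :
    2 * t + 1 ≤ minDist C ∧ IsECP t U V C :=
  stmt11_general n t ht U V C hUMDS hUdim hVMDS hVdim hC hC0
end
end

section
/- Let F be a field and let A be an n × n matrix over F such that every square submatrix of A has nonzero determinant. Then for every 1 ≤ r ≤ n and every choice of r distinct rows of A, the linear span of these r rows is an MDS (n, r, n − r + 1) code: it has dimension r, and every nonzero vector in this span has Hamming weight at least n − r + 1. -/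
open Finset

noncomputable section

lemma key {F : Type*} [Field F] {n r : ℕ} (A : Matrix (Fin n) (Fin n) F)
    (hA : ∀ (s : ℕ) (r c : Fin s → Fin n), 1 ≤ s →
      Function.Injective r → Function.Injective c → (A.submatrix r c).det ≠ 0)
    (hr1 : 1 ≤ r)
    (rows : Fin r → Fin n) (hrows : Function.Injective rows)
    (cols : Fin r → Fin n) (hcols : Function.Injective cols)
    (g : Fin r → F) (h : ∀ j, ∑ l, g l * A (rows l) (cols j) = 0) : g = 0 := by
  set M := A.submatrix rows cols with hM
  have hdet : IsUnit M.det := (Ne.isUnit (hA r rows cols hr1 hrows hcols))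
  have hv : Matrix.vecMul g M = 0 := by
    funext j
    simpa [Matrix.vecMul, dotProduct, hM, Matrix.submatrix] using h j
  have := congrArg (fun v => Matrix.vecMul v M⁻¹) hv
  simpa [Matrix.vecMul_vecMul, Matrix.mul_nonsing_inv M hdet] using this

lemma weight_lb {F : Type*} [Field F] {n r : ℕ} (A : Matrix (Fin n) (Fin n) F)
    (hA : ∀ (s : ℕ) (r c : Fin s → Fin n), 1 ≤ s →
      Function.Injective r → Function.Injective c → (A.submatrix r c).det ≠ 0)
    (hr1 : 1 ≤ r) (hrn : r ≤ n)
    (rows : Fin r → Fin n) (hrows : Function.Injective rows)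
    (g : Fin r → F) (hg : g ≠ 0) :
    n - r + 1 ≤ hWeight (∑ l, g l • A (rows l)) ∧ (∑ l, g l • A (rows l)) ≠ 0 := by
  classical
  set c : Fin n → F := ∑ l, g l • A (rows l) with hc
  have hcoord : ∀ i, c i = ∑ l, g l * A (rows l) i := by
    intro i; simp [hc, Finset.sum_apply]
  set Z : Finset (Fin n) := Finset.univ.filter (fun i => c i = 0) with hZ
  have hZcard : Z.card ≤ r - 1 := by
    by_contra hcon
    push_neg at hcon
    have hrZ : r ≤ Z.card := by omega
    obtain ⟨t, hts, htc⟩ := Finset.exists_subset_card_eq hrZ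
    have e := t.equivFin
    set cols : Fin r → Fin n := fun j => (e.symm (Fin.cast htc.symm j)).1 with hcols
    have hcinj : Function.Injective cols := by
      intro a b hab
      have := Subtype.val_injective hab
      have := e.symm.injective this
      exact (Fin.cast_injective _) this
    have hcz : ∀ j, cols j ∈ Z := fun j => hts (e.symm (Fin.cast htc.symm j)).2
    have : g = 0 := by
      apply key A hA hr1 rows hrows cols hcinj
      intro j
      have h2 := hcz j
      rw [hZ, Finset.mem_filter] at h2
      rw [← hcoord (cols j)]; exact h2.2
    exact hg this
  have hcne : c ≠ 0 := by
    intro h0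
    apply hg
    apply key A hA hr1 rows hrows (Fin.castLE hrn) (Fin.castLE_injective hrn)
    intro j
    rw [← hcoord]
    simp [h0]
  refine ⟨?_, hcne⟩
  have hw : hWeight c = (Finset.univ.filter (fun i => c i ≠ 0)).card := by
    rw [hWeight, Set.ncard_eq_toFinset_card']
    congr 1
    ext i; simp
  have hsplit : (Finset.univ.filter (fun i => c i ≠ 0)).card + Z.card = n := by
    rw [hZ]
    have := Finset.card_filter_add_card_filter_not
      (s := (Finset.univ : Finset (Fin n))) (p := fun i => c i ≠ 0)
    simpa using this
  omega

/-- if every square submatrix of the `n × n` matrix `A` has nonzero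
determinant, then the span of any `r` distinct rows of `A` is an MDS
`(n, r, n-r+1)` code. -/
theorem stmt12 {F : Type*} [Field F] (n : ℕ) (A : Matrix (Fin n) (Fin n) F)
    (hA : ∀ (s : ℕ) (r c : Fin s → Fin n), 1 ≤ s →
      Function.Injective r → Function.Injective c → (A.submatrix r c).det ≠ 0)
    (r : ℕ) (hr1 : 1 ≤ r) (hrn : r ≤ n)
    (rows : Fin r → Fin n) (hrows : Function.Injective rows) :
    Module.finrank F (Submodule.span F (Set.range fun l : Fin r => A (rows l))) = r ∧
    minDist (Submodule.span F (Set.range fun l : Fin r => A (rows l))) = n - r + 1 := by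
  classical
  set B : Fin r → (Fin n → F) := fun l => A (rows l) with hB
  have hLI : LinearIndependent F B := by
    rw [Fintype.linearIndependent_iff]
    intro g hg l
    by_contra hgl
    have hgne : g ≠ 0 := fun h0 => hgl (by rw [h0]; rfl)
    exact (weight_lb A hA hr1 hrn rows hrows g hgne).2 hg
  constructor
  · rw [finrank_span_eq_card hLI]; simp
  -- minDist
  set C := Submodule.span F (Set.range B) with hC
  set S : Set ℕ := {d | ∃ c ∈ C, c ≠ 0 ∧ hWeight c = d} with hS
  have hlb : ∀ d ∈ S, n - r + 1 ≤ d := by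
    rintro d ⟨c, hcC, hcne, rfl⟩
    rw [hC, Submodule.mem_span_range_iff_exists_fun] at hcC
    obtain ⟨g, hgc⟩ := hcC
    have hgne : g ≠ 0 := by
      rintro rfl
      apply hcne
      rw [← hgc]; simp
    have := (weight_lb A hA hr1 hrn rows hrows g hgne).1
    rwa [hgc] at this
  -- membership: construct a codeword of weight n - r + 1
  have hr1n : r - 1 ≤ n := by omega
  set v : Fin r → (Fin (r-1) → F) := fun l j => A (rows l) (Fin.castLE hr1n j) with hv
  have hnLI : ¬ LinearIndependent F v := by
    intro h
    have := h.fintype_card_le_finrank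
    simp [Module.finrank_pi] at this
    omega
  rw [Fintype.not_linearIndependent_iff] at hnLI
  obtain ⟨g, hgsum, l₀, hgl₀⟩ := hnLI
  have hgne : g ≠ 0 := fun h0 => hgl₀ (by rw [h0]; rfl)
  set c : Fin n → F := ∑ l, g l • B l with hc
  have hcC : c ∈ C := by
    rw [hC]
    exact Submodule.sum_mem _ fun l _ => Submodule.smul_mem _ _
      (Submodule.subset_span ⟨l, rfl⟩)
  obtain ⟨hwlb, hcne⟩ := weight_lb A hA hr1 hrn rows hrows g hgne
  -- c vanishes on the first r-1 coordinates
  have hczero : ∀ j : Fin (r-1), c (Fin.castLE hr1n j) = 0 := by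
    intro j
    have := congrFun hgsum j
    simpa [hc, hv, Finset.sum_apply] using this
  -- weight upper bound
  have hwub : hWeight c ≤ n - r + 1 := by
    have hw : hWeight c = (Finset.univ.filter (fun i => c i ≠ 0)).card := by
      rw [hWeight, Set.ncard_eq_toFinset_card']
      congr 1
      ext i; simp
    set Z : Finset (Fin n) := Finset.univ.filter (fun i => c i = 0) with hZ
    have hsplit : (Finset.univ.filter (fun i => c i ≠ 0)).card + Z.card = n := by
      rw [hZ]
      have := Finset.card_filter_add_card_filter_not
        (s := (Finset.univ : Finset (Fin n))) (p := fun i => c i ≠ 0)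
      simpa using this
    have hTZ : (Finset.univ.image (Fin.castLE hr1n) : Finset (Fin n)) ⊆ Z := by
      intro i hi
      rw [Finset.mem_image] at hi
      obtain ⟨j, _, rfl⟩ := hi
      rw [hZ, Finset.mem_filter]
      exact ⟨Finset.mem_univ _, hczero j⟩
    have hTcard : (Finset.univ.image (Fin.castLE hr1n) : Finset (Fin n)).card = r - 1 := by
      rw [Finset.card_image_of_injective _ (Fin.castLE_injective hr1n)]
      simp
    have := Finset.card_le_card hTZ
    omega
  have hmem : n - r + 1 ∈ S := ⟨c, hcC, hcne, le_antisymm hwub hwlb⟩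
  exact le_antisymm (Nat.sInf_le hmem) (le_csInf ⟨_, hmem⟩ hlb)
end
end

section
/- (Chebotarëv's theorem.) Let n be a prime number, let ω ∈ ℂ be a primitive n-th root of unity, and let F be the n × n matrix with (i, j) entry ω^{ij} for 0 ≤ i, j ≤ n − 1 (the Fourier n × n matrix). Then every square submatrix of F has nonzero determinant. -/
open Finset

noncomputable section

namespace Cheb13

open Polynomial


def sig (s : ℕ) : ℕ := ∑ k : Fin s, (k : ℕ)


lemma le_of_strictMono {s : ℕ} (f : Fin s → ℕ) (hf : StrictMono f) (k : Fin s) :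
    (k : ℕ) ≤ f k := by
  obtain ⟨m, hm⟩ := k
  induction m with
  | zero => simp
  | succ i ih =>
    have hi : i < s := by omega
    have h1 := ih hi
    have h2 : f ⟨i, hi⟩ < f ⟨i + 1, hm⟩ := hf (by simp [Fin.lt_def])
    simpa using lt_of_le_of_lt h1 h2

lemma sum_inj_aux {s : ℕ} (e : Fin s → ℕ) (he : Function.Injective e) :
    ∃ f : Fin s → ℕ, StrictMono f ∧ (∑ i, e i) = (∑ k, f k) ∧
      (∀ x : Fin s, ∃ k : Fin s, e x = f k) := by
  classical
  set T : Finset ℕ := Finset.image e Finset.univ with hT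
  have hcard : T.card = s := by
    rw [hT, Finset.card_image_of_injective _ he, Finset.card_univ, Fintype.card_fin]
  set g := T.orderIsoOfFin hcard with hg
  refine ⟨fun k => (g k : ℕ), ?_, ?_, ?_⟩
  · intro a b hab
    exact g.strictMono hab
  · have h1 : (∑ i, e i) = ∑ t ∈ T, t := by
      rw [hT, Finset.sum_image (fun x _ y _ h => he h)]
    have h2 : (∑ t ∈ T, t) = ∑ x : T, (x : ℕ) := (Finset.sum_coe_sort T _).symm
    have h3 : (∑ x : T, (x : ℕ)) = ∑ k : Fin s, (g k : ℕ) :=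
      (Equiv.sum_comp g.toEquiv (fun x : T => (x : ℕ))).symm
    rw [h1, h2, h3]
  · intro x
    have hx : e x ∈ T := by simp [hT]
    obtain ⟨k, hk⟩ := g.surjective ⟨e x, hx⟩
    exact ⟨k, by simp [hk]⟩

lemma sig_le_sum_of_inj {s : ℕ} (e : Fin s → ℕ) (he : Function.Injective e) :
    sig s ≤ ∑ i, e i := by
  obtain ⟨f, hmono, hsum, -⟩ := sum_inj_aux e he
  rw [hsum, sig]
  exact Finset.sum_le_sum fun k _ => le_of_strictMono f hmono k

lemma exists_perm_of_inj_sum_eq {s : ℕ} (e : Fin s → ℕ) (he : Function.Injective e)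
    (hsum : ∑ i, e i = sig s) :
    ∃ τ : Equiv.Perm (Fin s), e = fun i => ((τ i : Fin s) : ℕ) := by
  obtain ⟨f, hmono, hsumf, hmem⟩ := sum_inj_aux e he
  have hle : ∀ k : Fin s, (k : ℕ) ≤ f k := le_of_strictMono f hmono
  have heq : ∀ k ∈ Finset.univ, (k : Fin s) = (f k : ℕ) → True := fun _ _ _ => trivial
  have hfk : ∀ k : Fin s, f k = (k : ℕ) := by
    have := (Finset.sum_eq_sum_iff_of_le (fun k (_ : k ∈ Finset.univ) => hle k)).1 ?_
    · intro k; exact (this k (Finset.mem_univ k)).symm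
    · rw [← sig, ← hsumf, hsum]
  have hlt : ∀ x : Fin s, e x < s := by
    intro x
    obtain ⟨k, hk⟩ := hmem x
    rw [hk, hfk k]
    exact k.isLt
  set τ0 : Fin s → Fin s := fun i => ⟨e i, hlt i⟩ with hτ0
  have hinj : Function.Injective τ0 := by
    intro a b hab
    apply he
    simpa [hτ0, Fin.mk.injEq] using hab
  have hbij : Function.Bijective τ0 := Finite.injective_iff_bijective.mp hinj
  exact ⟨Equiv.ofBijective τ0 hbij, rfl⟩



/-- `∑_π sgn π ∏_i a (π i) ^ e i`. -/
def Wsum {s : ℕ} (a : Fin s → ℤ) (e : Fin s → ℕ) : ℤ :=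
  ∑ π : Equiv.Perm (Fin s), ((Equiv.Perm.sign π : ℤˣ) : ℤ) * ∏ i, a (π i) ^ e i

lemma Wsum_eq_det {s : ℕ} (a : Fin s → ℤ) (e : Fin s → ℕ) :
    Wsum a e = Matrix.det (Matrix.of fun x y : Fin s => a x ^ e y) := by
  rw [Matrix.det_apply, Wsum]
  refine Finset.sum_congr rfl fun π _ => ?_
  simp [Units.smul_def, zsmul_eq_mul]

lemma Wsum_eq_zero {s : ℕ} (a : Fin s → ℤ) (e : Fin s → ℕ)
    (h : ¬ Function.Injective e) : Wsum a e = 0 := by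
  rw [Function.not_injective_iff] at h
  obtain ⟨y, y', hyy, hne⟩ := h
  rw [Wsum_eq_det]
  exact Matrix.det_zero_of_column_eq hne (fun x => by simp [hyy])

lemma Wsum_perm {s : ℕ} (a : Fin s → ℤ) (τ : Equiv.Perm (Fin s)) :
    Wsum a (fun i => ((τ i : Fin s) : ℕ))
      = ((Equiv.Perm.sign τ : ℤˣ) : ℤ) * (Matrix.vandermonde a).det := by
  rw [Wsum_eq_det]
  have : (Matrix.of fun x y : Fin s => a x ^ ((τ y : Fin s) : ℕ))
      = (Matrix.vandermonde a).submatrix id τ := by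
    ext x y; simp [Matrix.vandermonde]
  rw [this, Matrix.det_permute']
  norm_cast

/-- `∑_π sgn π (∑_i a (π i) * b i) ^ m`. -/
def Ssum {s : ℕ} (a b : Fin s → ℤ) (m : ℕ) : ℤ :=
  ∑ π : Equiv.Perm (Fin s), ((Equiv.Perm.sign π : ℤˣ) : ℤ) * (∑ i, a (π i) * b i) ^ m

lemma Ssum_expand {s : ℕ} (a b : Fin s → ℤ) (m : ℕ) :
    Ssum a b m = ∑ e ∈ piAntidiag (Finset.univ : Finset (Fin s)) m,
      (Nat.multinomial Finset.univ e : ℤ) * ((∏ i, b i ^ e i) * Wsum a e) := by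
  rw [Ssum]
  have h : ∀ π : Equiv.Perm (Fin s), (∑ i, a (π i) * b i) ^ m
      = ∑ e ∈ piAntidiag (Finset.univ : Finset (Fin s)) m,
        (Nat.multinomial Finset.univ e : ℤ) * ((∏ i, b i ^ e i) * ∏ i, a (π i) ^ e i) := by
    intro π
    rw [Finset.sum_pow_eq_sum_piAntidiag]
    refine Finset.sum_congr rfl fun e _ => ?_
    rw [← Finset.prod_mul_distrib]
    simp [mul_pow, mul_comm]
  simp_rw [h, Finset.mul_sum]
  rw [Finset.sum_comm]
  refine Finset.sum_congr rfl fun e _ => ?_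
  rw [Wsum, Finset.mul_sum, Finset.mul_sum]
  refine Finset.sum_congr rfl fun π _ => ?_
  ring

lemma Ssum_eq_zero {s : ℕ} (a b : Fin s → ℤ) (m : ℕ) (hm : m < sig s) :
    Ssum a b m = 0 := by
  rw [Ssum_expand]
  refine Finset.sum_eq_zero fun e he => ?_
  rw [Finset.mem_piAntidiag] at he
  have hni : ¬ Function.Injective e := by
    intro hinj
    have h3 : sig s ≤ m := he.1 ▸ sig_le_sum_of_inj e hinj
    omega
  rw [Wsum_eq_zero a e hni]
  ring

lemma Ssum_sig {s : ℕ} (a b : Fin s → ℤ) :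
    Ssum a b (sig s) = (Nat.multinomial Finset.univ (fun k : Fin s => (k : ℕ)) : ℤ)
      * ((Matrix.vandermonde a).det * (Matrix.vandermonde b).det) := by
  classical
  rw [Ssum_expand]
  set E0 : Finset (Fin s → ℕ) :=
    Finset.image (fun τ : Equiv.Perm (Fin s) => fun i => ((τ i : Fin s) : ℕ)) Finset.univ with hE0
  have hsub : E0 ⊆ piAntidiag (Finset.univ : Finset (Fin s)) (sig s) := by
    intro e he
    rw [hE0, Finset.mem_image] at he
    obtain ⟨τ, -, rfl⟩ := he
    rw [Finset.mem_piAntidiag]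
    refine ⟨?_, fun i _ => Finset.mem_univ i⟩
    exact Equiv.sum_comp τ (fun k : Fin s => (k : ℕ))
  rw [← Finset.sum_subset hsub ?van]
  case van =>
    intro e he hne
    rw [Finset.mem_piAntidiag] at he
    have hni : ¬ Function.Injective e := by
      intro hinj
      obtain ⟨τ, rfl⟩ := exists_perm_of_inj_sum_eq e hinj he.1
      exact hne (Finset.mem_image.mpr ⟨τ, Finset.mem_univ τ, rfl⟩)
    rw [Wsum_eq_zero a e hni]; ring
  have hinj2 : Function.Injective
      (fun τ : Equiv.Perm (Fin s) => fun i => ((τ i : Fin s) : ℕ)) := by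
    intro τ τ' h
    ext i
    have := congrFun h i
    simpa [Fin.val_injective.eq_iff] using this
  rw [hE0, Finset.sum_image (fun x _ y _ h => hinj2 h)]
  have hmult : ∀ τ : Equiv.Perm (Fin s),
      Nat.multinomial Finset.univ (fun i => ((τ i : Fin s) : ℕ))
        = Nat.multinomial Finset.univ (fun k : Fin s => (k : ℕ)) := by
    intro τ
    have h1 := Nat.multinomial_spec (Finset.univ : Finset (Fin s))
      (fun i => ((τ i : Fin s) : ℕ))
    have h2 := Nat.multinomial_spec (Finset.univ : Finset (Fin s)) (fun k : Fin s => (k : ℕ))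
    have hp : (∏ i : Fin s, Nat.factorial ((τ i : Fin s) : ℕ))
        = ∏ k : Fin s, Nat.factorial (k : ℕ) :=
      Equiv.prod_comp τ (fun k : Fin s => Nat.factorial (k : ℕ))
    have hsum0 : (∑ i : Fin s, ((τ i : Fin s) : ℕ)) = ∑ k : Fin s, (k : ℕ) :=
      Equiv.sum_comp τ (fun k : Fin s => (k : ℕ))
    have hpos : 0 < ∏ k : Fin s, Nat.factorial (k : ℕ) :=
      Finset.prod_pos fun k _ => Nat.factorial_pos _
    apply Nat.eq_of_mul_eq_mul_left hpos
    rw [← hp, h1, hp, h2, hsum0]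
  calc (∑ τ : Equiv.Perm (Fin s),
        (Nat.multinomial Finset.univ (fun i => ((τ i : Fin s) : ℕ)) : ℤ)
          * ((∏ i, b i ^ ((τ i : Fin s) : ℕ)) * Wsum a (fun i => ((τ i : Fin s) : ℕ))))
      = ∑ τ : Equiv.Perm (Fin s),
        (Nat.multinomial Finset.univ (fun k : Fin s => (k : ℕ)) : ℤ)
          * (Matrix.vandermonde a).det
          * (((Equiv.Perm.sign τ : ℤˣ) : ℤ) * ∏ i, b i ^ ((τ i : Fin s) : ℕ)) := by
        refine Finset.sum_congr rfl fun τ _ => ?_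
        rw [hmult τ, Wsum_perm]
        ring
    _ = _ := by
        rw [← Finset.mul_sum]
        have : (∑ τ : Equiv.Perm (Fin s),
            ((Equiv.Perm.sign τ : ℤˣ) : ℤ) * ∏ i, b i ^ ((τ i : Fin s) : ℕ))
            = (Matrix.vandermonde b).det := by
          rw [← Matrix.det_transpose, Matrix.det_apply]
          refine Finset.sum_congr rfl fun τ _ => ?_
          simp [Units.smul_def, zsmul_eq_mul, Matrix.vandermonde]
        rw [this]; ring

lemma descPoly (k : ℕ) : ∃ st : ℕ → ℤ, ∀ b : ℕ,
    (Nat.factorial k : ℤ) * (Nat.choose b k : ℤ)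
      = (b : ℤ) ^ k + ∑ m ∈ Finset.range k, st m * (b : ℤ) ^ m := by
  classical
  set P : ℤ[X] := ∏ j ∈ Finset.range k, (X - C (j : ℤ)) with hP
  have hmonic : P.Monic := monic_prod_of_monic _ _ fun j _ => monic_X_sub_C _
  have hdeg : P.natDegree = k := by
    rw [hP, natDegree_prod _ _ (fun j _ => (monic_X_sub_C ((j : ℕ) : ℤ)).ne_zero)]
    simp only [natDegree_X_sub_C, Finset.sum_const, Finset.card_range, smul_eq_mul, mul_one]
  refine ⟨P.coeff, fun b => ?_⟩
  have heval : P.eval (b : ℤ) = (Nat.descFactorial b k : ℤ) := by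
    rw [hP, eval_prod]
    by_cases hbk : b < k
    · rw [Nat.descFactorial_eq_zero_iff_lt.2 hbk]
      refine Finset.prod_eq_zero (Finset.mem_range.mpr hbk) ?_
      simp
    · push_neg at hbk
      rw [Nat.descFactorial_eq_prod_range, Nat.cast_prod]
      refine Finset.prod_congr rfl fun i hi => ?_
      rw [Finset.mem_range] at hi
      have hib : i ≤ b := le_trans (le_of_lt hi) hbk
      simp only [eval_sub, eval_X, eval_C]
      omega
  have h2 : P.eval (b : ℤ) = ∑ m ∈ Finset.range (k + 1), P.coeff m * (b : ℤ) ^ m :=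
    eval_eq_sum_range' (p := P) (n := k + 1) (by omega) ((b : ℕ) : ℤ)
  rw [Finset.sum_range_succ] at h2
  have hck : P.coeff k = 1 := by
    have := hmonic.coeff_natDegree
    rwa [hdeg] at this
  rw [hck, one_mul] at h2
  have hdf : ((Nat.descFactorial b k : ℕ) : ℤ)
      = (Nat.factorial k : ℤ) * (Nat.choose b k : ℤ) := by
    rw [Nat.descFactorial_eq_factorial_mul_choose]; push_cast; ring
  rw [← hdf, ← heval, h2]
  ring

/-- The exponent `∑ i, r (π i) * c i`. -/
def Bexp {s : ℕ} (r c : Fin s → ℕ) (π : Equiv.Perm (Fin s)) : ℕ := ∑ i, r (π i) * c i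

lemma Bexp_cast {s : ℕ} (r c : Fin s → ℕ) (π : Equiv.Perm (Fin s)) :
    ((Bexp r c π : ℕ) : ℤ) = ∑ i, ((r (π i) : ℤ)) * ((c i : ℤ)) := by
  rw [Bexp]; push_cast; rfl

/-- `∑_π sgn π * choose (B π) k`. -/
def Tsum {s : ℕ} (r c : Fin s → ℕ) (k : ℕ) : ℤ :=
  ∑ π : Equiv.Perm (Fin s), ((Equiv.Perm.sign π : ℤˣ) : ℤ) * (Nat.choose (Bexp r c π) k : ℤ)

lemma fact_mul_Tsum {s : ℕ} (r c : Fin s → ℕ) (k : ℕ) (st : ℕ → ℤ)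
    (hst : ∀ b : ℕ, (Nat.factorial k : ℤ) * (Nat.choose b k : ℤ)
      = (b : ℤ) ^ k + ∑ m ∈ Finset.range k, st m * (b : ℤ) ^ m) :
    (Nat.factorial k : ℤ) * Tsum r c k
      = Ssum (fun i => ((r i : ℕ) : ℤ)) (fun i => ((c i : ℕ) : ℤ)) k
        + ∑ m ∈ Finset.range k, st m
            * Ssum (fun i => ((r i : ℕ) : ℤ)) (fun i => ((c i : ℕ) : ℤ)) m := by
  rw [Tsum, Finset.mul_sum]
  have h : ∀ π : Equiv.Perm (Fin s),
      (Nat.factorial k : ℤ) * (((Equiv.Perm.sign π : ℤˣ) : ℤ) * (Nat.choose (Bexp r c π) k : ℤ))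
      = ((Equiv.Perm.sign π : ℤˣ) : ℤ) * (∑ i, ((r (π i) : ℤ)) * ((c i : ℤ))) ^ k
        + ∑ m ∈ Finset.range k, st m
            * (((Equiv.Perm.sign π : ℤˣ) : ℤ) * (∑ i, ((r (π i) : ℤ)) * ((c i : ℤ))) ^ m) := by
    intro π
    have := hst (Bexp r c π)
    rw [Bexp_cast] at this
    calc (Nat.factorial k : ℤ) * (((Equiv.Perm.sign π : ℤˣ) : ℤ) * (Nat.choose (Bexp r c π) k : ℤ))
        = ((Equiv.Perm.sign π : ℤˣ) : ℤ)
            * ((Nat.factorial k : ℤ) * (Nat.choose (Bexp r c π) k : ℤ)) := by ring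
      _ = ((Equiv.Perm.sign π : ℤˣ) : ℤ)
            * ((∑ i, ((r (π i) : ℤ)) * ((c i : ℤ))) ^ k
              + ∑ m ∈ Finset.range k, st m * (∑ i, ((r (π i) : ℤ)) * ((c i : ℤ))) ^ m) := by
          rw [this]
      _ = _ := by rw [mul_add, Finset.mul_sum]; congr 1; refine Finset.sum_congr rfl fun m _ => ?_; ring
  simp_rw [h]
  simp only [Ssum, Finset.mul_sum]
  rw [Finset.sum_add_distrib]
  congr 1
  rw [Finset.sum_comm]

lemma Tsum_eq_zero {s : ℕ} (r c : Fin s → ℕ) (k : ℕ) (hk : k < sig s) :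
    Tsum r c k = 0 := by
  obtain ⟨st, hst⟩ := descPoly k
  have h := fact_mul_Tsum r c k st hst
  rw [Ssum_eq_zero _ _ _ hk] at h
  rw [Finset.sum_eq_zero (fun m hm => by
    rw [Finset.mem_range] at hm
    rw [Ssum_eq_zero _ _ _ (by omega), mul_zero])] at h
  have hfac : (Nat.factorial k : ℤ) ≠ 0 := by positivity
  have := mul_eq_zero.mp (by linarith : (Nat.factorial k : ℤ) * Tsum r c k = 0)
  tauto

lemma prod_fact_mul_Tsum_sig {s : ℕ} (r c : Fin s → ℕ) :
    (∏ k : Fin s, (Nat.factorial (k : ℕ) : ℤ)) * Tsum r c (sig s)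
      = (Matrix.vandermonde (fun i => ((r i : ℕ) : ℤ))).det
        * (Matrix.vandermonde (fun i => ((c i : ℕ) : ℤ))).det := by
  obtain ⟨st, hst⟩ := descPoly (sig s)
  have h := fact_mul_Tsum r c (sig s) st hst
  rw [Finset.sum_eq_zero (fun m hm => by
    rw [Finset.mem_range] at hm
    rw [Ssum_eq_zero _ _ _ hm, mul_zero]), add_zero, Ssum_sig] at h
  have hspec := Nat.multinomial_spec (Finset.univ : Finset (Fin s)) (fun k : Fin s => (k : ℕ))
  have hfac : (Nat.factorial (sig s) : ℤ) ≠ 0 := by positivity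
  apply mul_left_cancel₀ hfac
  calc (Nat.factorial (sig s) : ℤ)
        * ((∏ k : Fin s, (Nat.factorial (k : ℕ) : ℤ)) * Tsum r c (sig s))
      = (∏ k : Fin s, (Nat.factorial (k : ℕ) : ℤ))
          * ((Nat.factorial (sig s) : ℤ) * Tsum r c (sig s)) := by ring
    _ = (∏ k : Fin s, (Nat.factorial (k : ℕ) : ℤ))
          * ((Nat.multinomial Finset.univ (fun k : Fin s => (k : ℕ)) : ℤ)
            * ((Matrix.vandermonde (fun i => ((r i : ℕ) : ℤ))).det
              * (Matrix.vandermonde (fun i => ((c i : ℕ) : ℤ))).det)) := by rw [h]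
    _ = _ := by
        rw [← mul_assoc, ← Nat.cast_prod, ← Nat.cast_mul, hspec]
        rfl

lemma coeff_det_one_add_X {s n : ℕ} (r c : Fin s → Fin n) (k : ℕ) :
    (Matrix.det (Matrix.of fun p q : Fin s =>
        ((X : ℤ[X]) + 1) ^ ((r p : ℕ) * (c q : ℕ)))).coeff k
      = Tsum (fun i => (r i : ℕ)) (fun i => (c i : ℕ)) k := by
  rw [Matrix.det_apply, Polynomial.finset_sum_coeff, Tsum]
  refine Finset.sum_congr rfl fun π _ => ?_
  rw [Polynomial.coeff_smul]
  have h : (∏ i, (Matrix.of fun p q : Fin s =>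
        ((X : ℤ[X]) + 1) ^ ((r p : ℕ) * (c q : ℕ))) (π i) i)
      = ((X : ℤ[X]) + 1) ^ (Bexp (fun i => (r i : ℕ)) (fun i => (c i : ℕ)) π) := by
    simp only [Matrix.of_apply]
    rw [Bexp, Finset.prod_pow_eq_pow_sum]
  rw [h, Polynomial.coeff_X_add_one_pow]
  simp [Units.smul_def, zsmul_eq_mul]

lemma not_dvd_vandermonde {s n : ℕ} (hp : n.Prime) (r : Fin s → Fin n)
    (hr : Function.Injective r) :
    ¬ ((n : ℤ) ∣ (Matrix.vandermonde (fun i => ((r i : ℕ) : ℤ))).det) := by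
  rw [Matrix.det_vandermonde]
  intro hdvd
  have hprime : Prime (n : ℤ) := Nat.prime_iff_prime_int.mp hp
  rw [Prime.dvd_finset_prod_iff hprime] at hdvd
  obtain ⟨i, -, hi⟩ := hdvd
  rw [Prime.dvd_finset_prod_iff hprime] at hi
  obtain ⟨j, hj, hij⟩ := hi
  rw [Finset.mem_Ioi] at hj
  have hne : r j ≠ r i := fun h => (ne_of_gt hj) (hr h)
  have h1 : ((r j : ℕ) : ℤ) - ((r i : ℕ) : ℤ) ≠ 0 := by
    intro h
    exact hne (Fin.ext (by omega))
  have h2 : (n : ℤ) ≤ |((r j : ℕ) : ℤ) - ((r i : ℕ) : ℤ)| :=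
    Int.le_of_dvd (abs_pos.mpr h1) ((dvd_abs _ _).mpr hij)
  have h3 : |((r j : ℕ) : ℤ) - ((r i : ℕ) : ℤ)| < (n : ℤ) := by
    have hrj := (r j).isLt
    have hri := (r i).isLt
    rw [abs_lt]
    constructor <;> omega
  linarith

theorem main (n : ℕ) (hp : n.Prime) (ω : ℂ) (hω : IsPrimitiveRoot ω n)
    (s : ℕ) (hs : 1 ≤ s) (hsn : s ≤ n)
    (r c : Fin s → Fin n) (hr : Function.Injective r) (hc : Function.Injective c) :
    (Matrix.of fun p q : Fin s => ω ^ ((r p : ℕ) * (c q : ℕ))).det ≠ 0 := by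
  classical
  haveI : Fact n.Prime := ⟨hp⟩
  set σs := Cheb13.sig s with hσs
  set D1 : Polynomial ℤ := Matrix.det (Matrix.of fun p q : Fin s =>
      ((X : ℤ[X]) + 1) ^ ((r p : ℕ) * (c q : ℕ))) with hD1
  set T : ℤ := Cheb13.Tsum (fun i => ((r i : Fin n) : ℕ)) (fun i => ((c i : Fin n) : ℕ)) σs
    with hTdef
  have hdvd : (X : ℤ[X]) ^ σs ∣ D1 := by
    rw [Polynomial.X_pow_dvd_iff]
    intro d hd
    rw [hD1, Cheb13.coeff_det_one_add_X, Cheb13.Tsum_eq_zero _ _ _ hd]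
  obtain ⟨E1, hE1⟩ := hdvd
  have hE1c : E1.coeff 0 = T := by
    have h0 : D1.coeff σs = T := Cheb13.coeff_det_one_add_X r c σs
    rw [hE1] at h0
    rw [← h0]
    have := Polynomial.coeff_X_pow_mul E1 σs 0
    rw [zero_add] at this
    rw [this]
  -- `n` does not divide `T`
  have hnd : ¬ ((n : ℤ) ∣ T) := by
    intro hdvdT
    have hkey := Cheb13.prod_fact_mul_Tsum_sig (fun i => ((r i : Fin n) : ℕ))
      (fun i => ((c i : Fin n) : ℕ))
    rw [← hTdef] at hkey
    have hprime : Prime (n : ℤ) := Nat.prime_iff_prime_int.mp hp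
    have hdvdprod : (n : ℤ) ∣ (Matrix.vandermonde (fun i => (((r i : Fin n) : ℕ) : ℤ))).det
        * (Matrix.vandermonde (fun i => (((c i : Fin n) : ℕ) : ℤ))).det := by
      rw [← hkey]
      exact Dvd.dvd.mul_left hdvdT _
    rcases hprime.dvd_mul.mp hdvdprod with h | h
    · exact Cheb13.not_dvd_vandermonde hp r hr h
    · exact Cheb13.not_dvd_vandermonde hp c hc h
  -- the evaluation of `E1` at `ω - 1` is nonzero
  have hEne : (Polynomial.aeval (ω - 1)) E1 ≠ 0 := by
    intro h0
    set E : Polynomial ℤ := E1.comp ((X : ℤ[X]) - 1) with hE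
    have haevalE : (Polynomial.aeval ω) E = (Polynomial.aeval (ω - 1)) E1 := by
      rw [hE, Polynomial.aeval_comp]
      congr 1
      simp
    have hint : IsIntegral ℤ ω := hω.isIntegral hp.pos
    have hmin : minpoly ℤ ω ∣ E :=
      minpoly.isIntegrallyClosed_dvd hint (by rw [haevalE, h0])
    rw [← Polynomial.cyclotomic_eq_minpoly hω hp.pos] at hmin
    obtain ⟨G, hG⟩ := hmin
    have heval1 : E.eval 1 = T := by
      rw [hE, Polynomial.eval_comp]
      simp only [Polynomial.eval_sub, Polynomial.eval_X, Polynomial.eval_one, sub_self]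
      rw [← Polynomial.coeff_zero_eq_eval_zero, hE1c]
    have := congrArg (Polynomial.eval (1 : ℤ)) hG
    rw [Polynomial.eval_mul, Polynomial.eval_one_cyclotomic_prime, heval1] at this
    exact hnd ⟨G.eval 1, this⟩
  -- transfer to ℂ
  have hmap : (Matrix.of fun p q : Fin s => ω ^ ((r p : ℕ) * (c q : ℕ))).det
      = (Polynomial.aeval (ω - 1)) D1 := by
    rw [hD1, AlgHom.map_det]
    congr 1
    ext p q
    simp [AlgHom.mapMatrix_apply, Matrix.map_apply, sub_add_cancel]
  rw [hmap, hE1, map_mul, map_pow, Polynomial.aeval_X]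
  have hω1 : ω - 1 ≠ 0 := sub_ne_zero_of_ne (hω.ne_one hp.one_lt)
  exact mul_ne_zero (pow_ne_zero _ hω1) hEne


end Cheb13

/-- Chebotarëv's theorem: for `n` prime and `ω` a primitive `n`-th root
of unity, every square submatrix of the Fourier matrix `(ω^{ij})_{0 ≤ i,j ≤ n-1}`
has nonzero determinant. -/
theorem stmt13 (n : ℕ) (hp : n.Prime) (ω : ℂ) (hω : IsPrimitiveRoot ω n)
    (s : ℕ) (hs : 1 ≤ s) (hsn : s ≤ n)
    (r c : Fin s → Fin n) (hr : Function.Injective r) (hc : Function.Injective c) :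
    (Matrix.of fun p q : Fin s => ω ^ ((r p : ℕ) * (c q : ℕ))).det ≠ 0 :=
  Cheb13.main n hp ω hω s hs hsn r c hr hc
end
end

section
/- Let n ≥ 1, let ω ∈ ℂ be a primitive n-th root of unity, and let E_i = (ω^{i·0}, ω^{i·1}, …, ω^{i·(n-1)}) ∈ ℂ^n for 0 ≤ i ≤ n−1 be the rows of the Fourier n × n matrix. Let t ≥ 1 with 2t < n, let k ≥ 1 satisfy gcd(n, k) = 1, and let J = {j_1, …, j_{2t}} ⊆ {0, …, n−1} with j_{l+1} ≡ j_l + k (mod n) for l = 1, …, 2t−1. If w, w' ∈ ℂ^n each have at most t nonzero entries and ⟨E_j, w⟩ = ⟨E_j, w'⟩ for every j ∈ J, then w = w'. That is, a vector with at most t nonzero entries is uniquely determined by 2t Fourier measurements taken in arithmetic progression with difference k coprime to n. -/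
open Finset

noncomputable section

/-- a vector with at most `t` nonzero entries is uniquely determined by
`2t` Fourier measurements taken in arithmetic progression mod `n` with difference `k`
coprime to `n`. -/
theorem stmt15 (n : ℕ) (hn : 1 ≤ n) (ω : ℂ) (hω : IsPrimitiveRoot ω n)
    (t : ℕ) (ht : 1 ≤ t) (htn : 2 * t < n)
    (k : ℕ) (hk : 1 ≤ k) (hkn : Nat.gcd n k = 1)
    (jj : Fin (2 * t) → Fin n)
    (hjj : ∀ (l : ℕ) (h : l + 1 < 2 * t),
      ((jj ⟨l + 1, h⟩ : ℕ)) ≡ ((jj ⟨l, by omega⟩ : ℕ)) + k [MOD n])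
    (w w' : Fin n → ℂ) (hw : hWeight w ≤ t) (hw' : hWeight w' ≤ t)
    (hmeas : ∀ l : Fin (2 * t),
      bil (fun m : Fin n => ω ^ ((jj l : ℕ) * (m : ℕ))) w =
      bil (fun m : Fin n => ω ^ ((jj l : ℕ) * (m : ℕ))) w') :
    w = w' := by
  by_contra hne
  -- basic facts about ω
  have hn0 : 0 < n := hn
  have hkey : ∀ a : ℕ, ω ^ a = ω ^ (a % n) := by
    intro a
    conv_lhs => rw [← Nat.mod_add_div a n]
    rw [pow_add, pow_mul, hω.pow_eq_one, one_pow, mul_one]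
  have hpow : ∀ a b : ℕ, a ≡ b [MOD n] → ω ^ a = ω ^ b := by
    intro a b hab
    rw [hkey a, hkey b, hab]
  have hω0 : ω ≠ 0 := hω.ne_zero (by omega)
  -- the difference vector and its support
  set d : Fin n → ℂ := fun m => w m - w' m with hd
  have hdne : ∃ m, d m ≠ 0 := by
    by_contra h
    push_neg at h
    exact hne (funext fun m => sub_eq_zero.mp (h m))
  classical
  set S : Finset (Fin n) := Finset.univ.filter (fun m => d m ≠ 0) with hS
  have hcardW : ∀ v : Fin n → ℂ, (Finset.univ.filter (fun m => v m ≠ 0)).card = hWeight v := by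
    intro v
    rw [hWeight, ← Set.ncard_coe_finset]
    congr 1
    ext m
    simp
  have hScard : S.card ≤ 2 * t := by
    have hsub : S ⊆ (Finset.univ.filter (fun m => w m ≠ 0)) ∪
        (Finset.univ.filter (fun m => w' m ≠ 0)) := by
      intro m hm
      simp only [hS, mem_filter, mem_univ, true_and] at hm
      simp only [mem_union, mem_filter, mem_univ, true_and]
      by_contra h
      push_neg at h
      apply hm
      simp [hd, h.1, h.2]
    calc S.card ≤ _ := Finset.card_le_card hsub
      _ ≤ _ := Finset.card_union_le _ _
      _ ≤ 2 * t := by rw [hcardW w, hcardW w']; omega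
  set s : ℕ := S.card with hs
  -- enumerate the support
  set e : Fin s ≃ S := S.equivFin.symm with he
  set f : Fin s → Fin n := fun i => (e i : Fin n) with hf
  have hfinj : Function.Injective f := by
    intro i j hij
    exact e.injective (Subtype.ext hij)
  have hfS : ∀ i, f i ∈ S := fun i => (e i).2
  -- the first index
  set j0 : ℕ := (jj ⟨0, by omega⟩ : ℕ) with hj0
  have hjj' : ∀ l : Fin (2 * t), ((jj l : ℕ)) ≡ j0 + l * k [MOD n] := by
    rintro ⟨l, hl⟩
    induction l with
    | zero => simpa using Nat.ModEq.refl _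
    | succ m ih =>
      have h1 := hjj m hl
      have h2 := (ih (by omega)).add_right k
      simp only [Fin.val_mk] at *
      calc (jj ⟨m + 1, hl⟩ : ℕ) ≡ (jj ⟨m, by omega⟩ : ℕ) + k [MOD n] := h1
        _ ≡ j0 + m * k + k [MOD n] := h2
        _ = j0 + (m + 1) * k := by ring
  -- measurements on the difference
  have hmeas' : ∀ l : Fin (2 * t), ∑ m : Fin n, ω ^ ((jj l : ℕ) * (m : ℕ)) * d m = 0 := by
    intro l
    have h := hmeas l
    simp only [bil] at h
    simp only [hd, mul_sub, Finset.sum_sub_distrib, h, sub_self]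
  -- set up the Vandermonde system
  set x : Fin s → ℂ := fun i => ω ^ (k * (f i : ℕ)) with hx
  set c : Fin s → ℂ := fun i => ω ^ (j0 * (f i : ℕ)) * d (f i) with hc
  set M : Matrix (Fin s) (Fin s) ℂ := Matrix.transpose (Matrix.vandermonde x) with hM
  have hstl : s ≤ 2 * t := hScard
  have hMc : M.mulVec c = 0 := by
    funext l
    have hml := hmeas' (Fin.castLE hstl l)
    have hterm : ∀ m : Fin n,
        ω ^ ((jj (Fin.castLE hstl l) : ℕ) * (m : ℕ)) * d m
          = ω ^ (j0 * (m : ℕ)) * (ω ^ (k * (m : ℕ))) ^ (l : ℕ) * d m := by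
      intro m
      congr 1
      have h1 : (jj (Fin.castLE hstl l) : ℕ) * (m : ℕ) ≡ (j0 + (l : ℕ) * k) * (m : ℕ) [MOD n] :=
        (hjj' (Fin.castLE hstl l)).mul_right (m : ℕ)
      rw [hpow _ _ h1]
      rw [add_mul, pow_add, ← pow_mul]
      ring_nf
    rw [show ∑ m : Fin n, ω ^ ((jj (Fin.castLE hstl l) : ℕ) * (m : ℕ)) * d m
        = ∑ m : Fin n, ω ^ (j0 * (m : ℕ)) * (ω ^ (k * (m : ℕ))) ^ (l : ℕ) * d m from
        Finset.sum_congr rfl fun m _ => hterm m] at hml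
    have hsumS : ∑ m ∈ S, ω ^ (j0 * (m : ℕ)) * (ω ^ (k * (m : ℕ))) ^ (l : ℕ) * d m
        = ∑ m : Fin n, ω ^ (j0 * (m : ℕ)) * (ω ^ (k * (m : ℕ))) ^ (l : ℕ) * d m := by
      apply Finset.sum_subset (Finset.subset_univ S)
      intro m _ hm
      simp only [hS, mem_filter, mem_univ, true_and, not_not] at hm
      rw [hm, mul_zero]
    have hsumf : ∑ i : Fin s, ω ^ (j0 * (f i : ℕ)) * (ω ^ (k * (f i : ℕ))) ^ (l : ℕ) * d (f i)
        = ∑ m ∈ S, ω ^ (j0 * (m : ℕ)) * (ω ^ (k * (m : ℕ))) ^ (l : ℕ) * d m := by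
      rw [← Finset.sum_coe_sort S]
      exact Equiv.sum_comp e (fun m : S => ω ^ (j0 * ((m : Fin n) : ℕ)) *
        (ω ^ (k * ((m : Fin n) : ℕ))) ^ (l : ℕ) * d (m : Fin n))
    have : ∑ i : Fin s, ω ^ (j0 * (f i : ℕ)) * (ω ^ (k * (f i : ℕ))) ^ (l : ℕ) * d (f i) = 0 := by
      rw [hsumf, hsumS, hml]
    simp only [Matrix.mulVec, dotProduct, hM, Matrix.transpose_apply,
      Matrix.vandermonde, Matrix.of_apply, hc, hx, Pi.zero_apply]
    rw [← this]
    apply Finset.sum_congr rfl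
    intro i _
    ring
  -- x is injective
  have hxinj : Function.Injective x := by
    intro i i' hii
    simp only [hx] at hii
    rw [hkey (k * (f i : ℕ)), hkey (k * (f i' : ℕ))] at hii
    have hmod : k * (f i : ℕ) ≡ k * (f i' : ℕ) [MOD n] :=
      hω.pow_inj (Nat.mod_lt _ hn0) (Nat.mod_lt _ hn0) hii
    have h2 : (f i : ℕ) ≡ (f i' : ℕ) [MOD n] := Nat.ModEq.cancel_left_of_coprime hkn hmod
    have h3 : (f i : ℕ) = (f i' : ℕ) := by
      have := h2
      unfold Nat.ModEq at this
      rwa [Nat.mod_eq_of_lt (f i).isLt, Nat.mod_eq_of_lt (f i').isLt] at this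
    exact hfinj (Fin.ext h3)
  -- contradiction via the Vandermonde determinant
  have hdet : M.det ≠ 0 := by
    rw [hM, Matrix.det_transpose]
    exact Matrix.det_vandermonde_ne_zero_iff.mpr hxinj
  have hcne : c ≠ 0 := by
    obtain ⟨m0, hm0⟩ := hdne
    have hm0S : m0 ∈ S := by simp [hS, hm0]
    intro h0
    have := congrFun h0 (e.symm ⟨m0, hm0S⟩)
    simp only [hc, Pi.zero_apply] at this
    have hfm : f (e.symm ⟨m0, hm0S⟩) = m0 := by
      simp [hf]
    rw [hfm] at this
    rcases mul_eq_zero.mp this with h | h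
    · exact pow_ne_zero _ hω0 h
    · exact hm0 h
  exact hdet (Matrix.exists_mulVec_eq_zero_iff.mp ⟨c, hcne, hMc⟩)
end
end
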